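/- Let g(U) = tr(UΣUΣ) + tr(UH) + r·Σ_{i≠j} p_{ij}(u_{ij}) where p_{ij}(u) = u·sign(Ω_{ij}) if Ω_{ij} ≠ 0 and p_{ij}(u) = |u| if Ω_{ij} = 0, over symmetric matrices U, with Σ positive definite, H symmetric, r > 0. Then g is strictly convex and coercive, hence has a unique minimizer. -/

import Mathlib

/-!
Write `Σ = Yᴴ Y` with `Y` invertible. For symmetric `U`, `tr (U Σ U Σ) = tr (Mᴴ M)` with
`M = Y U Yᴴ ≠ 0` when `U ≠ 0`, so the quadratic part is the diagonal of a symmetric bilinear form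
that is positive definite on symmetric matrices, hence strictly convex there; the linear term and
the penalty are convex. By compactness of the unit sphere of `‖U‖₁ = ∑ |u_ij|`, the quadratic part
is at least `c₀ ‖U‖₁²`, while the linear term and the penalty are `O(‖U‖₁)` because
`|p_ij(u)| = |u|`; this is coercivity. A continuous coercive function on the closed set of
symmetric matrices attains its minimum, and strict convexity makes the minimizer unique.
-/

open Filter Set Matrix

theorem ConvexOn.finsetSum {𝕜 E β ι : Type*} [Semiring 𝕜] [PartialOrder 𝕜] [AddCommMonoid E]
    [AddCommMonoid β] [PartialOrder β] [IsOrderedAddMonoid β] [SMul 𝕜 E] [Module 𝕜 β]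
    {s : Set E} (hs : Convex 𝕜 s) (t : Finset ι) {f : ι → E → β}
    (hf : ∀ i ∈ t, ConvexOn 𝕜 s (f i)) : ConvexOn 𝕜 s fun x => ∑ i ∈ t, f i x := by
  classical
  induction t using Finset.induction_on with
  | empty => simpa using convexOn_const (0 : β) hs
  | insert i t hi ih =>
    simp only [Finset.sum_insert hi]
    exact (hf i (t.mem_insert_self i)).add (ih fun j hj => hf j (Finset.mem_insert_of_mem hj))

theorem LinearMap.BilinForm.IsSymm.strictConvexOn_apply_self {E : Type*} [AddCommGroup E]
    [Module ℝ E] {B : LinearMap.BilinForm ℝ E} (hB : B.IsSymm) {s : Set E} (hs : Convex ℝ s)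
    (hpos : ∀ x ∈ s, ∀ y ∈ s, x ≠ y → 0 < B (x - y) (x - y)) :
    StrictConvexOn ℝ s fun x => B x x := by
  refine ⟨hs, fun x hx y hy hxy a b ha hb hab => ?_⟩
  have hgap : a • B x x + b • B y y - B (a • x + b • y) (a • x + b • y) =
      a * b * B (x - y) (x - y) := by
    obtain rfl : b = 1 - a := by linarith
    simp only [map_add, map_sub, map_smul, LinearMap.add_apply, LinearMap.sub_apply,
      LinearMap.smul_apply, smul_eq_mul, hB.eq y x]
    ring
  linarith [mul_pos (mul_pos ha hb) (hpos x hx y hy hxy)]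

theorem StrictConvexOn.existsUnique_isMinOn {𝕜 E β : Type*} [Field 𝕜] [LinearOrder 𝕜]
    [IsStrictOrderedRing 𝕜] [TopologicalSpace E] [AddCommMonoid E] [Module 𝕜 E]
    [AddCommMonoid β] [LinearOrder β] [IsOrderedAddMonoid β] [Module 𝕜 β] [PosSMulMono 𝕜 β]
    [TopologicalSpace β] [ClosedIicTopology β] {s : Set E} {f : E → β}
    (hf : StrictConvexOn 𝕜 s f) (hfc : ContinuousOn f s) (hs : IsClosed s) {x₀ : E}
    (hx₀ : x₀ ∈ s) (hcoer : ∀ᶠ x in cocompact E ⊓ 𝓟 s, f x₀ ≤ f x) :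
    ∃! x, x ∈ s ∧ IsMinOn f s x := by
  obtain ⟨x, hx, hmin⟩ := hfc.exists_isMinOn' hs hx₀ hcoer
  exact ⟨x, ⟨hx, hmin⟩, fun y ⟨hy, hymin⟩ => hf.eq_of_isMinOn hymin hmin hy hx⟩

theorem exists_forall_le_mul_sq_sub_mul {a : ℝ} (ha : 0 < a) (b c : ℝ) :
    ∃ R, ∀ t, R ≤ t → c ≤ a * t ^ 2 - b * t := by
  refine ⟨max 1 ((b + |c|) / a), fun t ht => ?_⟩
  have ht1 : 1 ≤ t := le_of_max_le_left ht
  have hat : b + |c| ≤ a * t := (div_le_iff₀' ha).1 (le_of_max_le_right ht)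
  nlinarith [mul_nonneg (by linarith : (0 : ℝ) ≤ t) (sub_nonneg.2 hat),
    mul_nonneg (sub_nonneg.2 ht1) (abs_nonneg c), le_abs_self c]

-- The paper's `p_ij`, evaluated at `ω = Ω_ij`.
noncomputable def signPenalty (ω u : ℝ) : ℝ :=
  if ω = 0 then |u| else u * Real.sign ω

theorem abs_signPenalty (ω u : ℝ) : |signPenalty ω u| = |u| := by
  unfold signPenalty
  split_ifs with hω
  · exact abs_abs u
  · rcases Real.sign_apply_eq_of_ne_zero ω hω with h | h <;> simp [h]

theorem convexOn_signPenalty (ω : ℝ) : ConvexOn ℝ univ (signPenalty ω) := by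
  unfold signPenalty
  split_ifs
  · exact convexOn_univ_norm
  · exact (LinearMap.mulRight ℝ (Real.sign ω)).convexOn convex_univ

theorem continuous_signPenalty (ω : ℝ) : Continuous (signPenalty ω) := by
  unfold signPenalty
  split_ifs <;> fun_prop

namespace Matrix

section SumAbs

variable {m n : Type*} [Fintype m] [Fintype n]

noncomputable def sumAbs (U : Matrix m n ℝ) : ℝ := ∑ i, ∑ j, |U i j|

@[simp]
theorem sumAbs_zero : sumAbs (0 : Matrix m n ℝ) = 0 := by
  simp [sumAbs]

theorem sumAbs_nonneg (U : Matrix m n ℝ) : 0 ≤ sumAbs U := by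
  unfold sumAbs; positivity

theorem abs_le_sumAbs (U : Matrix m n ℝ) (i : m) (j : n) : |U i j| ≤ sumAbs U :=
  calc |U i j| ≤ ∑ j, |U i j| :=
        Finset.single_le_sum (f := fun j => |U i j|) (fun _ _ => abs_nonneg _) (Finset.mem_univ j)
    _ ≤ sumAbs U :=
        Finset.single_le_sum (f := fun i => ∑ j, |U i j|)
          (fun _ _ => by positivity) (Finset.mem_univ i)

theorem sumAbs_eq_zero_iff {U : Matrix m n ℝ} : sumAbs U = 0 ↔ U = 0 := by
  simp [sumAbs, Finset.sum_eq_zero_iff_of_nonneg, Finset.sum_nonneg, ← Matrix.ext_iff]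

theorem sumAbs_smul (c : ℝ) (U : Matrix m n ℝ) : sumAbs (c • U) = |c| * sumAbs U := by
  simp [sumAbs, abs_mul, Finset.mul_sum]

theorem continuous_sumAbs : Continuous (sumAbs : Matrix m n ℝ → ℝ) := by
  unfold sumAbs; fun_prop

theorem isCompact_setOf_sumAbs_le (R : ℝ) : IsCompact {U : Matrix m n ℝ | sumAbs U ≤ R} := by
  refine (isCompact_univ_pi fun _ => isCompact_univ_pi fun _ => isCompact_Icc (a := -R) (b := R))
    |>.of_isClosed_subset (isClosed_le continuous_sumAbs continuous_const) fun U hU i _ j _ => ?_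
  exact abs_le.1 ((abs_le_sumAbs U i j).trans hU)

theorem eventually_cocompact_le_sumAbs (R : ℝ) :
    ∀ᶠ U in cocompact (Matrix m n ℝ), R ≤ sumAbs U :=
  eventually_of_mem (isCompact_setOf_sumAbs_le R).compl_mem_cocompact fun _ hU =>
    le_of_lt (not_le.1 hU)

theorem abs_trace_mul_le (U : Matrix m n ℝ) (H : Matrix n m ℝ) :
    |(U * H).trace| ≤ sumAbs U * sumAbs H := by
  rw [trace, sumAbs, Finset.sum_mul]
  refine (Finset.abs_sum_le_sum_abs _ _).trans (Finset.sum_le_sum fun i _ => ?_)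
  rw [diag_apply, mul_apply, Finset.sum_mul]
  refine (Finset.abs_sum_le_sum_abs _ _).trans (Finset.sum_le_sum fun j _ => ?_)
  rw [abs_mul]
  exact mul_le_mul_of_nonneg_left (abs_le_sumAbs H j i) (abs_nonneg _)

theorem exists_pos_mul_sumAbs_sq_le {q : Matrix m n ℝ → ℝ} {s : Set (Matrix m n ℝ)}
    (hs : IsClosed s) (hs_smul : ∀ c : ℝ, ∀ U ∈ s, c • U ∈ s) (hq : Continuous q)
    (hq_smul : ∀ (c : ℝ) U, q (c • U) = c ^ 2 * q U) (hq_pos : ∀ U ∈ s, U ≠ 0 → 0 < q U) :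
    ∃ c₀ > 0, ∀ U ∈ s, c₀ * sumAbs U ^ 2 ≤ q U := by
  have hq0 : q 0 = 0 := by simpa using hq_smul 0 0
  set K := s ∩ {U | sumAbs U = 1}
  have hK : IsCompact K := (isCompact_setOf_sumAbs_le 1).of_isClosed_subset
    (hs.inter (isClosed_eq continuous_sumAbs continuous_const)) fun U hU => hU.2.le
  have hnormalize : ∀ U ∈ s, U ≠ 0 →
      (sumAbs U)⁻¹ • U ∈ K ∧ q U = sumAbs U ^ 2 * q ((sumAbs U)⁻¹ • U) := by
    intro U hU hU0
    have ht : sumAbs U ≠ 0 := mt sumAbs_eq_zero_iff.1 hU0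
    refine ⟨⟨hs_smul _ U hU, ?_⟩, ?_⟩
    · rw [mem_ofPred_eq, sumAbs_smul, abs_inv, abs_of_nonneg (sumAbs_nonneg U), inv_mul_cancel₀ ht]
    · rw [hq_smul, ← mul_assoc, ← mul_pow, mul_inv_cancel₀ ht, one_pow, one_mul]
  rcases K.eq_empty_or_nonempty with hKe | hKne
  · refine ⟨1, one_pos, fun U hU => ?_⟩
    obtain rfl : U = 0 := by
      by_contra hU0
      simpa [hKe] using (hnormalize U hU hU0).1
    simp [hq0]
  · obtain ⟨V, ⟨hVs, hV1⟩, hVmin⟩ := hK.exists_isMinOn hKne hq.continuousOn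
    have hV0 : V ≠ 0 := by
      rintro rfl
      simp at hV1
    refine ⟨q V, hq_pos V hVs hV0, fun U hU => ?_⟩
    rcases eq_or_ne U 0 with rfl | hU0
    · simp [hq0]
    · obtain ⟨hmem, heq⟩ := hnormalize U hU hU0
      rw [heq, mul_comm]
      exact mul_le_mul_of_nonneg_left (hVmin hmem) (sq_nonneg _)

end SumAbs

section SandwichTraceForm

variable {n : Type*} [Fintype n]

noncomputable def sandwichTraceForm (S : Matrix n n ℝ) : LinearMap.BilinForm ℝ (Matrix n n ℝ) :=
  LinearMap.mk₂ ℝ (fun U V => (U * S * V * S).trace)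
    (fun _ _ _ => by simp only [Matrix.add_mul, trace_add])
    (fun _ _ _ => by simp only [Matrix.smul_mul, trace_smul])
    (fun _ _ _ => by simp only [Matrix.mul_add, Matrix.add_mul, trace_add])
    (fun _ _ _ => by simp only [Matrix.mul_smul, Matrix.smul_mul, trace_smul])

@[simp]
theorem sandwichTraceForm_apply (S U V : Matrix n n ℝ) :
    sandwichTraceForm S U V = (U * S * V * S).trace :=
  rfl

theorem isSymm_sandwichTraceForm (S : Matrix n n ℝ) : (sandwichTraceForm S).IsSymm := by
  refine ⟨fun U V => ?_⟩
  simp only [sandwichTraceForm_apply]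
  rw [Matrix.mul_assoc, trace_mul_comm, ← Matrix.mul_assoc]

open scoped MatrixOrder in
theorem PosDef.sandwichTraceForm_pos [DecidableEq n] {S U : Matrix n n ℝ} (hS : S.PosDef)
    (hU : U.IsSymm) (hU0 : U ≠ 0) : 0 < sandwichTraceForm S U U := by
  obtain ⟨Y, hY, rfl⟩ := CStarAlgebra.isStrictlyPositive_iff_eq_star_mul_self.mp
    hS.isStrictlyPositive
  set M := Y * U * Yᴴ
  have hM : sandwichTraceForm (star Y * Y) U U = (Mᴴ * M).trace := by
    have hUh : Uᴴ = U := by rw [conjTranspose_eq_transpose_of_trivial, hU.eq]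
    rw [sandwichTraceForm_apply, star_eq_conjTranspose]
    simp only [M, conjTranspose_mul, conjTranspose_conjTranspose, hUh, Matrix.mul_assoc]
    rw [trace_mul_comm Y]
    simp only [Matrix.mul_assoc]
  have hM0 : M ≠ 0 := by
    have hYh : IsUnit Yᴴ := hY.star
    rwa [Ne, hYh.mul_left_eq_zero, hY.mul_right_eq_zero]
  rw [hM]
  exact (posSemidef_conjTranspose_mul_self M).trace_nonneg.lt_of_ne
    (Ne.symm (mt trace_conjTranspose_mul_self_eq_zero_iff.1 hM0))

end SandwichTraceForm

section IsSymm

variable {n α : Type*}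

theorem isClosed_setOf_isSymm [TopologicalSpace α] [T2Space α] :
    IsClosed {U : Matrix n n α | U.IsSymm} :=
  isClosed_eq continuous_id.matrix_transpose continuous_id

theorem convex_setOf_isSymm {𝕜 : Type*} [Semiring 𝕜] [PartialOrder 𝕜] [AddCommMonoid α]
    [Module 𝕜 α] : Convex 𝕜 {U : Matrix n n α | U.IsSymm} :=
  fun _ hU _ hV a b _ _ _ => (hU.smul a).add (hV.smul b)

end IsSymm

variable {n : Type*} [Fintype n] [DecidableEq n]

noncomputable def offDiagPenalty (Ω U : Matrix n n ℝ) : ℝ :=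
  ∑ i, ∑ j, if i = j then 0 else signPenalty (Ω i j) (U i j)

theorem abs_offDiagPenalty_le (Ω U : Matrix n n ℝ) : |offDiagPenalty Ω U| ≤ sumAbs U := by
  refine (Finset.abs_sum_le_sum_abs _ _).trans (Finset.sum_le_sum fun i _ => ?_)
  refine (Finset.abs_sum_le_sum_abs _ _).trans (Finset.sum_le_sum fun j _ => ?_)
  split_ifs
  · simp
  · exact (abs_signPenalty _ _).le

theorem convexOn_offDiagPenalty (Ω : Matrix n n ℝ) : ConvexOn ℝ univ (offDiagPenalty Ω) := by
  refine ConvexOn.finsetSum convex_univ _ fun i _ =>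
    ConvexOn.finsetSum convex_univ _ fun j _ => ?_
  by_cases hij : i = j
  · simpa [hij] using convexOn_const (0 : ℝ) convex_univ
  · simp only [hij, if_false]
    exact (convexOn_signPenalty (Ω i j)).comp_linearMap (entryLinearMap ℝ ℝ i j)

theorem continuous_offDiagPenalty (Ω : Matrix n n ℝ) : Continuous (offDiagPenalty Ω) := by
  unfold offDiagPenalty
  refine continuous_finsetSum _ fun i _ => continuous_finsetSum _ fun j _ => ?_
  split_ifs
  · exact continuous_const
  · exact (continuous_signPenalty _).comp (continuous_apply_apply i j)

noncomputable def glassoLimitObjective (S H Ω : Matrix n n ℝ) (r : ℝ) (U : Matrix n n ℝ) : ℝ :=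
  sandwichTraceForm S U U + (U * H).trace + r * offDiagPenalty Ω U

theorem continuous_glassoLimitObjective (S H Ω : Matrix n n ℝ) (r : ℝ) :
    Continuous (glassoLimitObjective S H Ω r) := by
  have hpen := continuous_offDiagPenalty Ω
  unfold glassoLimitObjective
  simp only [sandwichTraceForm_apply]
  fun_prop

theorem strictConvexOn_glassoLimitObjective {S : Matrix n n ℝ} (H Ω : Matrix n n ℝ) {r : ℝ}
    (hS : S.PosDef) (hr : 0 ≤ r) :
    StrictConvexOn ℝ {U : Matrix n n ℝ | U.IsSymm} (glassoLimitObjective S H Ω r) :=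
  (((isSymm_sandwichTraceForm S).strictConvexOn_apply_self convex_setOf_isSymm
    fun _ hU _ hV hUV => hS.sandwichTraceForm_pos (hU.sub hV) (sub_ne_zero.2 hUV)).add_convexOn
    ((traceLinearMap n ℝ ℝ ∘ₗ LinearMap.mulRight ℝ H).convexOn convex_setOf_isSymm)).add_convexOn
    (((convexOn_offDiagPenalty Ω).subset (subset_univ _) convex_setOf_isSymm).smul hr)

theorem exists_le_glassoLimitObjective {S : Matrix n n ℝ} (hS : S.PosDef) (H Ω : Matrix n n ℝ)
    (r c : ℝ) : ∃ R, ∀ U : Matrix n n ℝ, U.IsSymm → R ≤ sumAbs U →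
      c ≤ glassoLimitObjective S H Ω r U := by
  obtain ⟨c₀, hc₀, hquad⟩ := exists_pos_mul_sumAbs_sq_le isClosed_setOf_isSymm
    (fun c U hU => hU.smul c) (by simp only [sandwichTraceForm_apply]; fun_prop)
    (fun c U => by simp only [map_smul, LinearMap.smul_apply, smul_eq_mul]; ring)
    fun U hU hU0 => hS.sandwichTraceForm_pos hU hU0
  obtain ⟨R, hR⟩ := exists_forall_le_mul_sq_sub_mul hc₀ (sumAbs H + |r|) c
  refine ⟨R, fun U hU hRU => (hR _ hRU).trans ?_⟩
  have hlin := abs_le.1 (abs_trace_mul_le U H)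
  have hpen : |r * offDiagPenalty Ω U| ≤ |r| * sumAbs U := by
    rw [abs_mul]
    exact mul_le_mul_of_nonneg_left (abs_offDiagPenalty_le Ω U) (abs_nonneg r)
  unfold glassoLimitObjective
  linarith [hquad U hU, (abs_le.1 hpen).1]

end Matrix

theorem stmt19_general {d : ℕ} (S H Om : Matrix (Fin d) (Fin d) ℝ)
    (hSpd : S.PosDef)
    (r : ℝ) (hr : 0 < r) :
    StrictConvexOn ℝ {U : Matrix (Fin d) (Fin d) ℝ | U.IsSymm}
      (fun U => (U * S * U * S).trace + (U * H).trace +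
        r * ∑ i, ∑ j, if i = j then 0 else
          (if Om i j = 0 then |U i j| else U i j * Real.sign (Om i j))) ∧
    (∀ c : ℝ, ∃ R : ℝ, ∀ U : Matrix (Fin d) (Fin d) ℝ, U.IsSymm →
      R ≤ ∑ i, ∑ j, |U i j| →
      c ≤ (U * S * U * S).trace + (U * H).trace +
        r * ∑ i, ∑ j, if i = j then 0 else
          (if Om i j = 0 then |U i j| else U i j * Real.sign (Om i j))) ∧
    (∃! U : Matrix (Fin d) (Fin d) ℝ, U.IsSymm ∧
      ∀ V : Matrix (Fin d) (Fin d) ℝ, V.IsSymm →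
        (U * S * U * S).trace + (U * H).trace +
          r * ∑ i, ∑ j, (if i = j then 0 else
            (if Om i j = 0 then |U i j| else U i j * Real.sign (Om i j))) ≤
        (V * S * V * S).trace + (V * H).trace +
          r * ∑ i, ∑ j, (if i = j then 0 else
            (if Om i j = 0 then |V i j| else V i j * Real.sign (Om i j)))) := by
  have hconvex := strictConvexOn_glassoLimitObjective H Om hSpd hr.le
  have hcoercive := exists_le_glassoLimitObjective hSpd H Om r
  refine ⟨hconvex, hcoercive, ?_⟩
  obtain ⟨R, hR⟩ := hcoercive (glassoLimitObjective S H Om r 0)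
  exact hconvex.existsUnique_isMinOn (continuous_glassoLimitObjective S H Om r).continuousOn
    isClosed_setOf_isSymm isSymm_zero <| eventually_inf_principal.2 <|
      (eventually_cocompact_le_sumAbs R).mono fun U hRU hU => hR U hU hRU

/-- With Σ positive definite, H symmetric, r > 0, the limiting
objective g(U) = tr(UΣUΣ) + tr(UH) + r·Σ_{i≠j} p_{ij}(u_{ij}), where
p_{ij}(u) = u·sign(Ω_{ij}) if Ω_{ij} ≠ 0 and |u| otherwise, is strictly convex
and coercive on the subspace of symmetric matrices, hence has a unique
minimizer there. -/
theorem stmt19 {d : ℕ} (S H Om : Matrix (Fin d) (Fin d) ℝ)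
    (hSs : S.IsSymm) (hSpd : S.PosDef) (hH : H.IsSymm) (hOm : Om.IsSymm)
    (r : ℝ) (hr : 0 < r) :
    StrictConvexOn ℝ {U : Matrix (Fin d) (Fin d) ℝ | U.IsSymm}
      (fun U => (U * S * U * S).trace + (U * H).trace +
        r * ∑ i, ∑ j, if i = j then 0 else
          (if Om i j = 0 then |U i j| else U i j * Real.sign (Om i j))) ∧
    (∀ c : ℝ, ∃ R : ℝ, ∀ U : Matrix (Fin d) (Fin d) ℝ, U.IsSymm →
      R ≤ ∑ i, ∑ j, |U i j| →
      c ≤ (U * S * U * S).trace + (U * H).trace +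
        r * ∑ i, ∑ j, if i = j then 0 else
          (if Om i j = 0 then |U i j| else U i j * Real.sign (Om i j))) ∧
    (∃! U : Matrix (Fin d) (Fin d) ℝ, U.IsSymm ∧
      ∀ V : Matrix (Fin d) (Fin d) ℝ, V.IsSymm →
        (U * S * U * S).trace + (U * H).trace +
          r * ∑ i, ∑ j, (if i = j then 0 else
            (if Om i j = 0 then |U i j| else U i j * Real.sign (Om i j))) ≤
        (V * S * V * S).trace + (V * H).trace +
          r * ∑ i, ∑ j, (if i = j then 0 else
            (if Om i j = 0 then |V i j| else V i j * Real.sign (Om i j)))) :=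
  stmt19_general S H Om hSpd r hr
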